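/- arXiv:2401.15923 — 2 statements merged into one kernel-verified Lean document; each statement's English description precedes it below -/
import Mathlib

section
/- Let X be a Tychonoff space, λ a bornology on X with a closed base, and (Y,ρ) a metric space. If X is functionally generated with respect to Y by the family σλ, then C_{λ,ρ}(X,Y) is Dieudonné complete. -/
open Filter Topology Set

universe u v

/-- A space is Dieudonné complete if it embeds as a closed subspace of a
product of metric spaces. -/
def DieudonneComplete (X : Type u) [TopologicalSpace X] : Prop :=
  ∃ (ι : Type u) (M : ι → Type u) (m : ∀ i, MetricSpace (M i)) (f : X → ∀ i, M i),
    letI : ∀ i, TopologicalSpace (M i) := fun i => (m i).toUniformSpace.toTopologicalSpace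
    Topology.IsClosedEmbedding f

/-- A bornology (family of nonempty sets covering X, closed under finite unions and
nonempty subsets) which is moreover closed under taking closures (has a closed base). -/
def IsBornologyWithClosedBase {X : Type u} [TopologicalSpace X] (L : Set (Set X)) : Prop :=
  (∀ A ∈ L, A.Nonempty) ∧ (⋃₀ L = univ) ∧ (∀ A ∈ L, ∀ B ∈ L, A ∪ B ∈ L) ∧
    (∀ A ∈ L, ∀ B : Set X, B.Nonempty → B ⊆ A → B ∈ L) ∧ (∀ A ∈ L, closure A ∈ L)

/-- X is functionally generated by the family μ with respect to Y if for every
discontinuous f : X → Y there is A ∈ μ such that f|A extends to no continuous map X → Y. -/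
def FunctionallyGenerated (X : Type u) [TopologicalSpace X] (μ : Set (Set X))
    (Y : Type v) [TopologicalSpace Y] : Prop :=
  ∀ f : X → Y, ¬ Continuous f →
    ∃ A ∈ μ, ¬ ∃ g : X → Y, Continuous g ∧ ∀ x ∈ A, g x = f x

/-- σλ: the family of countable unions of members of L. -/
def sigmaFam {X : Type u} (L : Set (Set X)) : Set (Set X) :=
  {B | ∃ S : ℕ → Set X, (∀ n, S n ∈ L) ∧ B = ⋃ n, S n}

/-- C_{λ,ρ}(X,Y): the continuous maps from X to the metric space Y, carrying the
uniformity (hence topology) of uniform convergence on members of L. -/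
def CL (X : Type u) [TopologicalSpace X] (Y : Type v) [MetricSpace Y]
    (L : Set (Set X)) : Type (max u v) := C(X, Y)

noncomputable instance CL.instUniformSpace (X : Type u) [TopologicalSpace X] (Y : Type v)
    [MetricSpace Y] (L : Set (Set X)) : UniformSpace (CL X Y L) :=
  UniformSpace.comap (fun f => UniformOnFun.ofFun L (⇑(show C(X,Y) from f)))
    (UniformOnFun.uniformSpace X Y L)

/-!
Send `u ∈ C_{λ,ρ}(X,Y)` to its restrictions `u|A ∈ A →ᵤ Y` for `A ∈ λ` together with the values
`θ u` of all continuous `θ : C_{λ,ρ}(X,Y) → ℝ`. The restrictions alone already induce the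
topology, so this is an embedding into a product of metric spaces; the point is that the image is
closed. A point of its closure is the limit of a filter `F` that converges uniformly on each
`A ∈ λ` to some `f : X → Y` and along which every continuous `θ` is bounded. If `f` were
discontinuous, functional generation would give `S n ∈ λ` such that `f` agrees with no continuous
map on `⋃ n, S n`; then `D u = ∑ 2⁻ⁿ min (1, sup_{S n} ρ(u, f))` is continuous and positive on
`C_{λ,ρ}(X,Y)` and tends to `0` along `F`, so `1 / D` is unbounded along `F`.
-/

open scoped UniformConvergence

namespace DieudonneComplete

theorem of_isClosedEmbedding {Z W : Type u} [TopologicalSpace Z] [TopologicalSpace W]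
    {e : Z → W} (he : IsClosedEmbedding e) (hW : DieudonneComplete W) : DieudonneComplete Z := by
  obtain ⟨ι, M, m, f, hf⟩ := hW
  exact ⟨ι, M, m, f ∘ e, hf.comp he⟩

open TopologicalSpace in
theorem prod_pi {ι κ : Type u} (M : ι → Type u) (N : κ → Type u) [∀ i, TopologicalSpace (M i)]
    [∀ i, MetrizableSpace (M i)] [∀ k, TopologicalSpace (N k)] [∀ k, MetrizableSpace (N k)] :
    DieudonneComplete ((∀ i, M i) × (∀ k, N k)) := by
  let m : ∀ j, MetricSpace (Sum.elim M N j)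
    | .inl i => metrizableSpaceMetric (M i)
    | .inr k => metrizableSpaceMetric (N k)
  -- `metrizableSpaceMetric` induces the given topology definitionally, so the factors' own
  -- topologies are recovered on `ι` and `κ`.
  let _ : ∀ j, TopologicalSpace (Sum.elim M N j) := fun j =>
    (m j).toUniformSpace.toTopologicalSpace
  exact ⟨ι ⊕ κ, Sum.elim M N, m, _,
    (Homeomorph.sumPiEquivProdPi ι κ (Sum.elim M N)).symm.isClosedEmbedding⟩

end DieudonneComplete

namespace UniformOnFun

variable {α β : Type*} [UniformSpace β] {𝔖 : Set (Set α)}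

theorem isClosedEmbedding_pi_restrict [T2Space β] (h𝔖 : ⋃₀ 𝔖 = univ) :
    IsClosedEmbedding fun f : α →ᵤ[𝔖] β ↦
      fun s : 𝔖 ↦ UniformFun.ofFun ((s : Set α).domRestrict (toFun 𝔖 f)) := by
  have hcover : ∀ x, ∃ s : 𝔖, x ∈ (s : Set α) := fun x => by
    obtain ⟨s, hs, hx⟩ := mem_sUnion.mp (h𝔖 ▸ mem_univ x)
    exact ⟨⟨s, hs⟩, hx⟩
  choose σ hσ using hcover
  let compatible : Set (∀ s : 𝔖, ↥(s : Set α) →ᵤ β) :=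
    {p | ∀ (s t : 𝔖) (x : α) (hs : x ∈ (s : Set α)) (ht : x ∈ (t : Set α)),
      UniformFun.toFun (p s) ⟨x, hs⟩ = UniformFun.toFun (p t) ⟨x, ht⟩}
  have hcompatible : IsClosed compatible := by
    simp only [compatible, ofPred_forall]
    refine isClosed_iInter fun s => isClosed_iInter fun t => isClosed_iInter fun x =>
      isClosed_iInter fun hs => isClosed_iInter fun ht => isClosed_eq ?_ ?_ <;>
    exact (UniformFun.uniformContinuous_eval β _).continuous.comp (continuous_apply _)
  refine ⟨⟨isUniformInducing_pi_restrict.isInducing, fun f g hfg => ?_⟩,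
    isClosed_of_closure_subset fun p hp => ?_⟩
  · funext x
    exact congrFun (congrFun hfg (σ x)) ⟨x, hσ x⟩
  · have hpc : p ∈ compatible := closure_minimal (by rintro _ ⟨f, rfl⟩ s t x hs ht; rfl)
      hcompatible hp
    refine ⟨ofFun 𝔖 fun x => UniformFun.toFun (p (σ x)) ⟨x, hσ x⟩, funext fun s => ?_⟩
    funext ⟨x, hx⟩
    exact hpc (σ x) s x (hσ x) hx

end UniformOnFun

section WeightedSupDist

variable {α β : Type*} [EMetricSpace β]

noncomputable def truncSupDistOn (s : Set α) (f g : α → β) : ℝ :=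
  ENNReal.truncateToReal 1
    (edist (UniformFun.ofFun (s.domRestrict f)) (UniformFun.ofFun (s.domRestrict g)))

lemma truncSupDistOn_nonneg (s : Set α) (f g : α → β) : 0 ≤ truncSupDistOn s f g :=
  ENNReal.truncateToReal_nonneg

lemma truncSupDistOn_le_one (s : Set α) (f g : α → β) : truncSupDistOn s f g ≤ 1 :=
  (ENNReal.truncateToReal_le ENNReal.one_ne_top).trans_eq ENNReal.toReal_one

lemma truncSupDistOn_pos {s : Set α} {f g : α → β} {x : α} (hx : x ∈ s) (hfg : f x ≠ g x) :
    0 < truncSupDistOn s f g := by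
  have hedist :
      0 < edist (UniformFun.ofFun (s.domRestrict f)) (UniformFun.ofFun (s.domRestrict g)) :=
    (edist_pos.mpr hfg).trans_le (UniformFun.edist_eval_le (x := (⟨x, hx⟩ : s)))
  exact ENNReal.toReal_pos (lt_min one_pos hedist).ne' (min_lt_of_left_lt ENNReal.one_lt_top).ne

lemma continuous_truncSupDistOn {𝔖 : Set (Set α)} {s : Set α} (hs : s ∈ 𝔖) (g : α → β) :
    Continuous fun f : α →ᵤ[𝔖] β => truncSupDistOn s (UniformOnFun.toFun 𝔖 f) g :=
  (ENNReal.continuous_truncateToReal ENNReal.one_ne_top).comp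
    ((UniformOnFun.uniformContinuous_restrict α β 𝔖 hs).continuous.edist continuous_const)

noncomputable def weightedSupDist (S : ℕ → Set α) (f g : α → β) : ℝ :=
  ∑' n, (2⁻¹ : ℝ) ^ n * truncSupDistOn (S n) f g

variable {S : ℕ → Set α}

lemma norm_weightedSupDist_term_le (f g : α → β) (n : ℕ) :
    ‖(2⁻¹ : ℝ) ^ n * truncSupDistOn (S n) f g‖ ≤ (2⁻¹ : ℝ) ^ n := by
  rw [Real.norm_of_nonneg (by have := truncSupDistOn_nonneg (S n) f g; positivity)]
  exact mul_le_of_le_one_right (by positivity) (truncSupDistOn_le_one _ _ _)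

@[simp]
lemma weightedSupDist_self (f : α → β) : weightedSupDist S f f = 0 := by
  simp [weightedSupDist, truncSupDistOn, ENNReal.truncateToReal]

lemma weightedSupDist_pos {f g : α → β} (h : ¬ EqOn f g (⋃ n, S n)) :
    0 < weightedSupDist S f g := by
  obtain ⟨x, hx, hfg⟩ := not_forall₂.mp h
  obtain ⟨n, hxn⟩ := mem_iUnion.mp hx
  have hsum : Summable fun n => (2⁻¹ : ℝ) ^ n * truncSupDistOn (S n) f g :=
    (summable_geometric_of_lt_one (by norm_num) (by norm_num)).of_norm_bounded
      (norm_weightedSupDist_term_le f g)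
  exact hsum.tsum_pos (fun n => mul_nonneg (by positivity) (truncSupDistOn_nonneg _ f g)) n
    (mul_pos (by positivity) (truncSupDistOn_pos hxn hfg))

lemma continuous_weightedSupDist {𝔖 : Set (Set α)} (hS : ∀ n, S n ∈ 𝔖) (g : α → β) :
    Continuous fun f : α →ᵤ[𝔖] β => weightedSupDist S (UniformOnFun.toFun 𝔖 f) g :=
  continuous_tsum (fun n => continuous_const.mul (continuous_truncSupDistOn (hS n) g))
    (summable_geometric_of_lt_one (by norm_num) (by norm_num))
    fun n f => norm_weightedSupDist_term_le _ g n

end WeightedSupDist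

theorem FunctionallyGenerated.continuous_of_tendsto {X : Type u} {Y : Type v} [TopologicalSpace X]
    [MetricSpace Y] {L : Set (Set X)} (hX : FunctionallyGenerated X (sigmaFam L) Y)
    {Z : Type*} [TopologicalSpace Z] {φ : Z → X →ᵤ[L] Y} (hφ : Continuous φ)
    (hφc : ∀ z, Continuous (UniformOnFun.toFun L (φ z))) {F : Filter Z} [F.NeBot] {f : X → Y}
    (hf : Tendsto φ F (𝓝 (UniformOnFun.ofFun L f)))
    (hbdd : ∀ θ : C(Z, ℝ), IsBoundedUnder (· ≤ ·) F θ) : Continuous f := by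
  by_contra hfc
  obtain ⟨_, ⟨S, hS, rfl⟩, hext⟩ := hX f hfc
  let D : Z → ℝ := fun z => weightedSupDist S (UniformOnFun.toFun L (φ z)) f
  have hD : Continuous D := (continuous_weightedSupDist hS f).comp hφ
  have hDpos : ∀ z, 0 < D z := fun z => weightedSupDist_pos fun h => hext ⟨_, hφc z, h⟩
  have hD0 : Tendsto D F (𝓝 0) := by
    have := ((continuous_weightedSupDist hS f).tendsto (UniformOnFun.ofFun L f)).comp hf
    rwa [UniformOnFun.toFun_ofFun, weightedSupDist_self] at this
  have hDinv : Tendsto (fun z => (D z)⁻¹) F atTop :=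
    (tendsto_nhdsWithin_iff.mpr ⟨hD0, .of_forall hDpos⟩).inv_tendsto_nhdsGT_zero
  obtain ⟨c, hc⟩ := hbdd ⟨fun z => (D z)⁻¹, hD.inv₀ fun z => (hDpos z).ne'⟩
  obtain ⟨z, hzc, hz⟩ := ((hDinv.eventually_gt_atTop c).and hc).exists
  exact hzc.not_ge hz

namespace CL

variable {X : Type u} [TopologicalSpace X] {Y : Type v} [MetricSpace Y] {L : Set (Set X)}

def toUniformOnFun (u : CL X Y L) : X →ᵤ[L] Y := UniformOnFun.ofFun L ⇑(show C(X, Y) from u)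

lemma isUniformInducing_toUniformOnFun :
    IsUniformInducing (toUniformOnFun : CL X Y L → X →ᵤ[L] Y) :=
  isUniformInducing_iff_uniformSpace.mpr rfl

lemma injective_toUniformOnFun : Function.Injective (toUniformOnFun : CL X Y L → X →ᵤ[L] Y) :=
  fun u v h => (DFunLike.coe_injective h : (show C(X, Y) from u) = v)

lemma continuous_toFun_toUniformOnFun (u : CL X Y L) :
    Continuous (UniformOnFun.toFun L u.toUniformOnFun) :=
  (show C(X, Y) from u).continuous

lemma mem_range_toUniformOnFun {g : X →ᵤ[L] Y} (hg : Continuous (UniformOnFun.toFun L g)) :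
    g ∈ range (toUniformOnFun : CL X Y L → X →ᵤ[L] Y) :=
  ⟨(⟨UniformOnFun.toFun L g, hg⟩ : C(X, Y)), rfl⟩

noncomputable def toProd (u : CL X Y L) : (X →ᵤ[L] Y) × (C(CL X Y L, ℝ) → ULift.{max u v} ℝ) :=
  (u.toUniformOnFun, fun θ => ULift.up (θ u))

theorem isClosedEmbedding_toProd (hcov : ⋃₀ L = univ)
    (hX : FunctionallyGenerated X (sigmaFam L) Y) :
    IsClosedEmbedding (toProd : CL X Y L → _) := by
  have hφ := isUniformInducing_toUniformOnFun (X := X) (Y := Y) (L := L)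
  have hcont : Continuous (toProd : CL X Y L → _) :=
    hφ.uniformContinuous.continuous.prodMk
      (continuous_pi fun θ => continuous_uliftUp.comp θ.continuous)
  refine ⟨⟨.of_comp hcont continuous_fst hφ.isInducing,
    fun u v h => injective_toUniformOnFun (congrArg Prod.fst h)⟩,
    isClosed_of_closure_subset fun p hp => ?_⟩
  have : (comap toProd (𝓝 p)).NeBot := comap_neBot_iff.mpr fun t ht =>
    (mem_closure_iff_nhds.mp hp t ht).elim fun _ ⟨hxt, u, hu⟩ => ⟨u, hu ▸ hxt⟩
  have hF : Tendsto toProd (comap toProd (𝓝 p)) (𝓝 p) := tendsto_comap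
  have hF₁ := (continuous_fst.tendsto p).comp hF
  have hlim : Continuous (UniformOnFun.toFun L p.1) :=
    hX.continuous_of_tendsto hφ.uniformContinuous.continuous continuous_toFun_toUniformOnFun hF₁
      fun θ => (((continuous_uliftDown.comp ((continuous_apply θ).comp continuous_snd)).tendsto
        p).comp hF).isBoundedUnder_le
  obtain ⟨u, hu⟩ := mem_range_toUniformOnFun hlim
  have hFu : Tendsto id (comap toProd (𝓝 p)) (𝓝 u) :=
    hφ.isInducing.tendsto_nhds_iff.mpr (hu ▸ hF₁)
  have := UniformOnFun.t2Space_of_covering (β := Y) hcov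
  exact ⟨u, tendsto_nhds_unique ((hcont.tendsto u).comp hFu) hF⟩

end CL

theorem dieudonneComplete_CL_of_functionallyGenerated_general (X : Type u) [TopologicalSpace X]
    (Y : Type u) [MetricSpace Y] (L : Set (Set X))
    (hL : IsBornologyWithClosedBase L)
    (hX : FunctionallyGenerated X (sigmaFam L) Y) :
    DieudonneComplete (CL X Y L) := by
  obtain ⟨-, hcov, -⟩ := hL
  have hprod := DieudonneComplete.prod_pi (fun s : L => ↥(s : Set X) →ᵤ Y)
    (fun _ : C(CL X Y L, ℝ) => ULift.{u} ℝ)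
  exact hprod.of_isClosedEmbedding
    (((UniformOnFun.isClosedEmbedding_pi_restrict hcov).prodMap .id).comp
      (CL.isClosedEmbedding_toProd hcov hX))

/-- If X is functionally generated with respect to Y by σλ, then C_{λ,ρ}(X,Y)
is Dieudonné complete. -/
theorem dieudonneComplete_CL_of_functionallyGenerated (X : Type u) [TopologicalSpace X]
    [T35Space X] (Y : Type u) [MetricSpace Y] (L : Set (Set X))
    (hL : IsBornologyWithClosedBase L)
    (hX : FunctionallyGenerated X (sigmaFam L) Y) :
    DieudonneComplete (CL X Y L) :=
  dieudonneComplete_CL_of_functionallyGenerated_general X Y L hL hX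
end

section
/- Let X be a Tychonoff space, λ a bornology on X with a closed base, (Y,ρ) a metric space, and e : X_λ → X the natural condensation from the λ-leader X_λ of X onto X. If for every f ∈ C_{e⁻¹(λ),ρ}(X_λ,Y) \ e^#(C_{λ,ρ}(X,Y)) there is a Gδ-set V in C_{e⁻¹(λ),ρ}(X_λ,Y) containing f and disjoint from e^#(C_{λ,ρ}(X,Y)), then X is functionally generated with respect to Y by σλ. -/
open Filter Topology Set

universe u v

/-- The λ-leader of X: the same set with the final topology with respect to the
inclusions of the closures of members of L (so a set is closed iff its intersection
with the closure of each member of L is closed there). -/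
def Leader (X : Type u) [TopologicalSpace X] (L : Set (Set X)) : Type u := X

instance Leader.instTopologicalSpace (X : Type u) [TopologicalSpace X] (L : Set (Set X)) :
    TopologicalSpace (Leader X L) :=
  show TopologicalSpace X from
    ⨆ A ∈ L, TopologicalSpace.coinduced (Subtype.val : closure A → X) inferInstance

/-! If the restriction of a discontinuous `f` to every member of `σλ` extended continuously to
`X`, then `f` would be continuous on each `cl A`, `A ∈ λ`, hence continuous on the leader `X_λ`.
A Gδ-set `V ∋ f` is a countable intersection of open sets, each containing a basic
neighbourhood `⟨A_n, ε_n⟩` of `f`, so every `g` agreeing with `f` on `⋃ A_n ∈ σλ`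
lies in `V`.
A continuous extension of `f|⋃ A_n` is such a `g`, and it is continuous on `X`, so `V` meets
`e^#(C_{λ,ρ}(X,Y))`. -/

theorem mem_sigmaFam_of_mem {X : Type u} {L : Set (Set X)} {A : Set X} (hA : A ∈ L) :
    A ∈ sigmaFam L :=
  ⟨fun _ => A, fun _ => hA, (iUnion_const A).symm⟩

namespace IsBornologyWithClosedBase

variable {X : Type u} [TopologicalSpace X] {L : Set (Set X)}

theorem nonempty [Nonempty X] (hL : IsBornologyWithClosedBase L) : L.Nonempty := by
  obtain ⟨A, hA, -⟩ := hL.2.1.symm ▸ mem_univ (Classical.arbitrary X)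
  exact ⟨A, hA⟩

theorem directedOn (hL : IsBornologyWithClosedBase L) : DirectedOn (· ⊆ ·) L :=
  fun A hA B hB => ⟨A ∪ B, hL.2.2.1 A hA B hB, subset_union_left, subset_union_right⟩

end IsBornologyWithClosedBase

namespace Leader

variable {X : Type u} [TopologicalSpace X] {L : Set (Set X)} {Y : Type v} [TopologicalSpace Y]

theorem continuous_of_continuous_comp_closure (g : X → Y)
    (hg : ∀ A ∈ L, Continuous (g ∘ (Subtype.val : closure A → X))) :
    Continuous (show Leader X L → Y from g) :=
  continuous_iSup_dom.2 fun A => continuous_iSup_dom.2 fun hA =>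
    continuous_coinduced_dom.2 (hg A hA)

theorem continuous_of_continuous {g : X → Y} (hg : Continuous g) :
    Continuous (show Leader X L → Y from g) :=
  continuous_of_continuous_comp_closure g fun _ _ => hg.comp continuous_subtype_val

end Leader

namespace CL

variable {X : Type u} [TopologicalSpace X] {Y : Type v} [MetricSpace Y] {L : Set (Set X)}

-- `CL X Y L` is `C(X, Y)` under another uniformity; these identity maps pass between them.
def ofContinuousMap (L : Set (Set X)) (f : C(X, Y)) : CL X Y L := f

def toContinuousMap (f : CL X Y L) : C(X, Y) := f

theorem hasBasis_nhds (hne : L.Nonempty) (hdir : DirectedOn (· ⊆ ·) L) (f : C(X, Y)) :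
    (𝓝 (ofContinuousMap L f)).HasBasis (fun p : Set X × ℝ => p.1 ∈ L ∧ 0 < p.2)
      fun p => toContinuousMap ⁻¹' {g | ∀ x ∈ p.1, dist (g x) (f x) < p.2} := by
  convert (UniformOnFun.hasBasis_nhds_of_basis X Y L (UniformOnFun.ofFun L f) hne hdir
    Metric.uniformity_basis_dist).comap fun g => UniformOnFun.ofFun L ⇑(toContinuousMap g) using 1
  · exact nhds_induced _ _
  · rfl

theorem exists_seq_forall_mem_of_isGδ (hne : L.Nonempty) (hdir : DirectedOn (· ⊆ ·) L)
    {V : Set (CL X Y L)} (hV : IsGδ V) {f : C(X, Y)} (hf : ofContinuousMap L f ∈ V) :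
    ∃ A : ℕ → Set X, (∀ n, A n ∈ L) ∧
      ∀ g : C(X, Y), EqOn g f (⋃ n, A n) → ofContinuousMap L g ∈ V := by
  obtain ⟨U, hUo, rfl⟩ := hV.eq_iInter_nat
  have hU : ∀ n, ∃ p : Set X × ℝ, (p.1 ∈ L ∧ 0 < p.2) ∧
      toContinuousMap ⁻¹' {g | ∀ x ∈ p.1, dist (g x) (f x) < p.2} ⊆ U n := fun n =>
    (hasBasis_nhds hne hdir f).mem_iff.1 ((hUo n).mem_nhds (mem_iInter.1 hf n))
  choose p hp hpU using hU
  refine ⟨fun n => (p n).1, fun n => (hp n).1, fun g hg => mem_iInter.2 fun n => hpU n ?_⟩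
  intro x hx
  rw [toContinuousMap, ofContinuousMap, hg (mem_iUnion_of_mem n hx), dist_self]
  exact (hp n).2

end CL

theorem functionallyGenerated_of_gdelta_general (X : Type u) [TopologicalSpace X]
    (Y : Type u) [MetricSpace Y] (L : Set (Set X)) (hL : IsBornologyWithClosedBase L)
    (h : ∀ f : CL (Leader X L) Y (show Set (Set (Leader X L)) from L),
      ¬ Continuous (show X → Y from ⇑(show C(Leader X L, Y) from f)) →
      ∃ V : Set (CL (Leader X L) Y (show Set (Set (Leader X L)) from L)),
        IsGδ V ∧ f ∈ V ∧
        ∀ g ∈ V, ¬ Continuous (show X → Y from ⇑(show C(Leader X L, Y) from g))) :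
    FunctionallyGenerated X (sigmaFam L) Y := by
  intro f hf
  by_contra! hext
  have : Nonempty X := by
    by_contra! hX
    exact hf continuous_of_discreteTopology
  have hfL : Continuous (show Leader X L → Y from f) :=
    Leader.continuous_of_continuous_comp_closure f fun A hA => by
      obtain ⟨g, hg, hgf⟩ := hext _ (mem_sigmaFam_of_mem (hL.2.2.2.2 A hA))
      exact (hg.comp continuous_subtype_val).congr fun x => hgf x x.2
  obtain ⟨V, hV, hfV, hV_disc⟩ := h (CL.ofContinuousMap _ ⟨_, hfL⟩) hf
  obtain ⟨A, hA, hAV⟩ :=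
    CL.exists_seq_forall_mem_of_isGδ (X := Leader X L) hL.nonempty hL.directedOn hV hfV
  obtain ⟨g, hg, hgf⟩ := hext _ ⟨A, hA, rfl⟩
  exact hV_disc _ (hAV ⟨_, Leader.continuous_of_continuous hg⟩ hgf) hg

/-- If every f in C_{e⁻¹(λ),ρ}(X_λ,Y) \\ e^#(C_{λ,ρ}(X,Y)) lies in a Gδ-set disjoint
from e^#(C_{λ,ρ}(X,Y)) (where e : X_λ → X is the natural condensation from the
λ-leader, so e^#(C_{λ,ρ}(X,Y)) consists of those g that are continuous for the
original topology of X), then X is functionally generated with respect to Y by σλ. -/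
theorem functionallyGenerated_of_gdelta (X : Type u) [TopologicalSpace X] [T35Space X]
    (Y : Type u) [MetricSpace Y] (L : Set (Set X)) (hL : IsBornologyWithClosedBase L)
    (h : ∀ f : CL (Leader X L) Y (show Set (Set (Leader X L)) from L),
      ¬ Continuous (show X → Y from ⇑(show C(Leader X L, Y) from f)) →
      ∃ V : Set (CL (Leader X L) Y (show Set (Set (Leader X L)) from L)),
        IsGδ V ∧ f ∈ V ∧
        ∀ g ∈ V, ¬ Continuous (show X → Y from ⇑(show C(Leader X L, Y) from g))) :
    FunctionallyGenerated X (sigmaFam L) Y :=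
  functionallyGenerated_of_gdelta_general X Y L hL h
end
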